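/- Mass-weighted POD optimality: for M symmetric positive definite and snapshot matrix S, the subspace basis U = M^{−1/2}Ũ, where Ũ consists of the k leading left singular vectors of M^{1/2}S, minimizes Σ_t ‖s_t − UUᵀM s_t‖_M² over all bases U with UᵀMU = I_k, where ‖x‖_M² = xᵀMx and s_t are the columns of S. -/
import Mathlib


open Matrix


lemma pod_dp1 {n k : ℕ} (A : Matrix (Fin n) (Fin k) ℝ) (y : Fin k → ℝ) (z : Fin n → ℝ) :
    y ⬝ᵥ (Aᵀ *ᵥ z) = (A *ᵥ y) ⬝ᵥ z := by
  rw [dotProduct_mulVec, vecMul_transpose]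

lemma pod_aux_proj {n k : ℕ} (W : Matrix (Fin n) (Fin k) ℝ) (hW : Wᵀ * W = 1) (x : Fin n → ℝ) :
    (x - W *ᵥ (Wᵀ *ᵥ x)) ⬝ᵥ (x - W *ᵥ (Wᵀ *ᵥ x)) = x ⬝ᵥ x - (Wᵀ *ᵥ x) ⬝ᵥ (Wᵀ *ᵥ x) := by
  set y := Wᵀ *ᵥ x with hy
  have h1 : (W *ᵥ y) ⬝ᵥ (W *ᵥ y) = y ⬝ᵥ y := by
    rw [← pod_dp1, mulVec_mulVec, hW, one_mulVec]
  have h2 : x ⬝ᵥ (W *ᵥ y) = y ⬝ᵥ y := by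
    rw [dotProduct_mulVec, ← mulVec_transpose, ← hy]
  have h3 : (W *ᵥ y) ⬝ᵥ x = y ⬝ᵥ y := by rw [dotProduct_comm, h2]
  rw [sub_dotProduct, dotProduct_sub, dotProduct_sub, h1, h2, h3]
  ring


lemma pod_dp_self_nonneg {n : ℕ} (w : Fin n → ℝ) : 0 ≤ w ⬝ᵥ w :=
  Finset.sum_nonneg fun _ _ => mul_self_nonneg _

lemma pod_dotProduct_sum {n : ℕ} {ι : Type*} (s : Finset ι) (w : Fin n → ℝ) (f : ι → Fin n → ℝ) :
    w ⬝ᵥ (∑ i ∈ s, f i) = ∑ i ∈ s, w ⬝ᵥ f i := by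
  simp only [dotProduct, Finset.sum_apply, Finset.mul_sum]
  exact Finset.sum_comm

lemma pod_sum_dotProduct {n : ℕ} {ι : Type*} (s : Finset ι) (w : Fin n → ℝ) (f : ι → Fin n → ℝ) :
    (∑ i ∈ s, f i) ⬝ᵥ w = ∑ i ∈ s, f i ⬝ᵥ w := by
  rw [dotProduct_comm, pod_dotProduct_sum]
  exact Finset.sum_congr rfl fun i _ => dotProduct_comm _ _

lemma pod_orth_sum {r T : ℕ} (v : Fin r → Fin T → ℝ)
    (hv : ∀ i j, v i ⬝ᵥ v j = if i = j then 1 else 0) (p q : Fin r → ℝ) :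
    ∑ t : Fin T, (∑ i, p i * v i t) * (∑ j, q j * v j t) = ∑ i, p i * q i := by
  have h : ∀ t, (∑ i, p i * v i t) * (∑ j, q j * v j t)
      = ∑ i, ∑ j, (p i * q j) * (v i t * v j t) := by
    intro t
    rw [Finset.sum_mul_sum]
    exact Finset.sum_congr rfl fun i _ => Finset.sum_congr rfl fun j _ => by ring
  simp_rw [h]
  rw [Finset.sum_comm]
  refine Finset.sum_congr rfl fun i _ => ?_
  rw [Finset.sum_comm]
  have h2 : ∀ j : Fin r, (∑ t, (p i * q j) * (v i t * v j t)) = (p i * q j) * (v i ⬝ᵥ v j) := by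
    intro j; rw [dotProduct, Finset.mul_sum]
  simp_rw [h2, hv, mul_ite, mul_one, mul_zero]
  simp

lemma pod_bessel {r n : ℕ} (u : Fin r → Fin n → ℝ)
    (hu : ∀ i j, u i ⬝ᵥ u j = if i = j then 1 else 0) (w : Fin n → ℝ) :
    ∑ i, (u i ⬝ᵥ w) ^ 2 ≤ w ⬝ᵥ w := by
  set s : Fin n → ℝ := ∑ i, (u i ⬝ᵥ w) • u i with hs
  have hws : w ⬝ᵥ s = ∑ i, (u i ⬝ᵥ w) ^ 2 := by
    rw [hs, pod_dotProduct_sum]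
    refine Finset.sum_congr rfl fun i _ => ?_
    rw [dotProduct_smul, smul_eq_mul, dotProduct_comm]; ring
  have hsw : s ⬝ᵥ w = ∑ i, (u i ⬝ᵥ w) ^ 2 := by rw [dotProduct_comm, hws]
  have hss : s ⬝ᵥ s = ∑ i, (u i ⬝ᵥ w) ^ 2 := by
    rw [hs, pod_sum_dotProduct]
    refine Finset.sum_congr rfl fun i _ => ?_
    rw [smul_dotProduct, pod_dotProduct_sum]
    simp [dotProduct_smul, hu, smul_eq_mul, mul_ite, Finset.sum_ite_eq]
    ring
  have h0 : 0 ≤ (w - s) ⬝ᵥ (w - s) := pod_dp_self_nonneg _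
  rw [sub_dotProduct, dotProduct_sub, dotProduct_sub, hws, hsw, hss] at h0
  linarith

lemma pod_filter_eq {r k : ℕ} (hk : k ≤ r) :
    Finset.univ.filter (fun i : Fin r => (i : ℕ) < k)
      = Finset.univ.map (Fin.castLEEmb hk) := by
  ext i
  simp only [Finset.mem_filter, Finset.mem_univ, true_and, Finset.mem_map]
  constructor
  · intro hi
    exact ⟨⟨i, hi⟩, by ext; simp⟩
  · rintro ⟨j, rfl⟩
    simpa using j.isLt

lemma pod_card_filter {r k : ℕ} (hk : k ≤ r) :
    (Finset.univ.filter (fun i : Fin r => (i : ℕ) < k)).card = k := by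
  rw [pod_filter_eq hk, Finset.card_map, Finset.card_univ, Fintype.card_fin]

lemma pod_comb {r k : ℕ} (hk : k ≤ r) (σ : Fin r → ℝ) (hσnn : ∀ i, 0 ≤ σ i)
    (hσmono : ∀ i j : Fin r, i ≤ j → σ j ≤ σ i) (c : Fin r → ℝ)
    (hc0 : ∀ i, 0 ≤ c i) (hc1 : ∀ i, c i ≤ 1) (hcs : ∑ i, c i ≤ (k : ℝ)) :
    ∑ i, σ i ^ 2 * c i ≤ ∑ i ∈ Finset.univ.filter (fun i : Fin r => (i : ℕ) < k), σ i ^ 2 := by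
  set A := Finset.univ.filter (fun i : Fin r => (i : ℕ) < k) with hA
  rcases lt_or_eq_of_le hk with h | h
  · set κ : Fin r := ⟨k, h⟩ with hκ
    set τ : ℝ := σ κ ^ 2 with hτ
    have hτnn : 0 ≤ τ := sq_nonneg _
    have hcard : (A.card : ℝ) = (k : ℝ) := by
      rw [hA, pod_card_filter hk]
    have h1 : ∀ i ∈ A, σ i ^ 2 * c i - σ i ^ 2 ≤ τ * c i - τ := by
      intro i hi
      have hik : (i : ℕ) < k := by simpa [hA] using hi
      have hle : σ κ ≤ σ i := hσmono i κ (by rw [Fin.le_def]; simp [hκ]; omega)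
      have hsq : τ ≤ σ i ^ 2 := by
        rw [hτ]; exact pow_le_pow_left₀ (hσnn κ) hle 2
      nlinarith [hc1 i, hc0 i]
    have h2 : ∀ i ∈ Finset.univ \ A, σ i ^ 2 * c i ≤ τ * c i := by
      intro i hi
      have hik : k ≤ (i : ℕ) := by simpa [hA] using hi
      have hle : σ i ≤ σ κ := hσmono κ i (by rw [Fin.le_def]; simp [hκ]; omega)
      have hsq : σ i ^ 2 ≤ τ := by
        rw [hτ]; exact pow_le_pow_left₀ (hσnn i) hle 2
      exact mul_le_mul_of_nonneg_right hsq (hc0 i)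
    have hsplit : ∀ f : Fin r → ℝ,
        ∑ i, f i = ∑ i ∈ Finset.univ \ A, f i + ∑ i ∈ A, f i := by
      intro f
      exact (Finset.sum_sdiff (Finset.filter_subset _ _)).symm
    have e1 : ∑ i ∈ A, (σ i ^ 2 * c i - σ i ^ 2) ≤ ∑ i ∈ A, (τ * c i - τ) :=
      Finset.sum_le_sum h1
    have e2 : ∑ i ∈ Finset.univ \ A, σ i ^ 2 * c i ≤ ∑ i ∈ Finset.univ \ A, τ * c i :=
      Finset.sum_le_sum h2
    have e3 : ∑ i ∈ A, (τ * c i - τ) + ∑ i ∈ Finset.univ \ A, τ * c i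
        = τ * (∑ i, c i) - τ * A.card := by
      rw [Finset.sum_sub_distrib, Finset.sum_const, nsmul_eq_mul,
        ← Finset.mul_sum, ← Finset.mul_sum, hsplit c, mul_add]
      ring
    have e4 : τ * (∑ i, c i) - τ * A.card ≤ 0 := by
      rw [hcard]; nlinarith
    have e5 := hsplit (fun i => σ i ^ 2 * c i)
    rw [Finset.sum_sub_distrib] at e1
    linarith
  · subst h
    have hAuniv : A = Finset.univ := by
      rw [hA]
      exact Finset.filter_true_of_mem fun i _ => i.isLt
    rw [hAuniv]
    refine Finset.sum_le_sum fun i _ => ?_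
    calc σ i ^ 2 * c i ≤ σ i ^ 2 * 1 := mul_le_mul_of_nonneg_left (hc1 i) (sq_nonneg _)
      _ = σ i ^ 2 := mul_one _

theorem mass_weighted_pod_optimality
    (n T r k : ℕ) (hk : k ≤ r)
    (M : Matrix (Fin n) (Fin n) ℝ) (hM : M.PosDef)
    (R : Matrix (Fin n) (Fin n) ℝ) (hR : R.PosDef) (hRsymm : Rᵀ = R)
    (hRsq : R * R = M)
    (Rinv : Matrix (Fin n) (Fin n) ℝ) (hRinv : R * Rinv = 1) (hRinv' : Rinv * R = 1)
    (S : Matrix (Fin n) (Fin T) ℝ)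
    -- SVD of the weighted snapshot matrix R * S
    (σ : Fin r → ℝ) (hσnn : ∀ i, 0 ≤ σ i)
    (hσmono : ∀ i j : Fin r, i ≤ j → σ j ≤ σ i)
    (u : Fin r → (Fin n → ℝ)) (v : Fin r → (Fin T → ℝ))
    (hu : ∀ i j, u i ⬝ᵥ u j = if i = j then 1 else 0)
    (hv : ∀ i j, v i ⬝ᵥ v j = if i = j then 1 else 0)
    (hRS : R * S = ∑ i, σ i • vecMulVec (u i) (v i))
    (Ut : Matrix (Fin n) (Fin k) ℝ)
    (hUt : Ut = Matrix.of fun a i => u (Fin.castLE hk i) a)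
    (U : Matrix (Fin n) (Fin k) ℝ) (hU : U = Rinv * Ut)
    -- the M-norm projection error functional
    (cost : Matrix (Fin n) (Fin k) ℝ → ℝ)
    (hcost : ∀ W, cost W = ∑ t : Fin T,
        ((fun a => S a t) - W *ᵥ (Wᵀ *ᵥ (M *ᵥ fun a => S a t))) ⬝ᵥ
          M *ᵥ ((fun a => S a t) - W *ᵥ (Wᵀ *ᵥ (M *ᵥ fun a => S a t)))) :
    Uᵀ * M * U = 1 ∧
    ∀ V : Matrix (Fin n) (Fin k) ℝ, Vᵀ * M * V = 1 → cost U ≤ cost V := by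
  classical
  have hRU : R * U = Ut := by rw [hU, ← Matrix.mul_assoc, hRinv, Matrix.one_mul]
  have hWt : ∀ W : Matrix (Fin n) (Fin k) ℝ, Wᵀ * M * W = (R * W)ᵀ * (R * W) := by
    intro W
    rw [transpose_mul, hRsymm, ← hRsq]
    simp [Matrix.mul_assoc]
  have hUtO : Utᵀ * Ut = 1 := by
    ext i j
    rw [hUt]
    simp only [mul_apply, transpose_apply, Matrix.of_apply, one_apply]
    have h := hu (Fin.castLE hk i) (Fin.castLE hk j)
    rw [dotProduct] at h
    rw [h]
    simp [Fin.castLE_inj]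
  have part1 : Uᵀ * M * U = 1 := by rw [hWt, hRU, hUtO]
  refine ⟨part1, ?_⟩
  intro V hV
  set x : Fin T → Fin n → ℝ := fun t => R *ᵥ (fun a => S a t) with hx
  have hMdp : ∀ a b : Fin n → ℝ, a ⬝ᵥ (M *ᵥ b) = (R *ᵥ a) ⬝ᵥ (R *ᵥ b) := by
    intro a b
    rw [← hRsq, ← mulVec_mulVec]
    nth_rewrite 1 [← hRsymm]
    rw [pod_dp1]
  have hcost2 : ∀ W : Matrix (Fin n) (Fin k) ℝ, Wᵀ * M * W = 1 →
      cost W = (∑ t, x t ⬝ᵥ x t)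
        - ∑ t, ((R * W)ᵀ *ᵥ x t) ⬝ᵥ ((R * W)ᵀ *ᵥ x t) := by
    intro W hW
    have hWo : (R * W)ᵀ * (R * W) = 1 := by rw [← hWt, hW]
    rw [hcost, ← Finset.sum_sub_distrib]
    refine Finset.sum_congr rfl fun t _ => ?_
    have hMs : M *ᵥ (fun a => S a t) = R *ᵥ x t := by
      show M *ᵥ (fun a => S a t) = R *ᵥ (R *ᵥ (fun a => S a t))
      rw [mulVec_mulVec, hRsq]
    have hvec : R *ᵥ ((fun a => S a t) - W *ᵥ (Wᵀ *ᵥ (M *ᵥ fun a => S a t)))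
        = x t - (R * W) *ᵥ ((R * W)ᵀ *ᵥ x t) := by
      rw [mulVec_sub, hMs]
      congr 1
      simp only [mulVec_mulVec, transpose_mul, hRsymm, Matrix.mul_assoc]
    rw [hMdp, hvec, pod_aux_proj _ hWo]
  have hxapp : ∀ t a, x t a = ∑ i, σ i * u i a * v i t := by
    intro t a
    have h1 : x t a = (R * S) a t := by
      show (R *ᵥ fun b => S b t) a = _
      rw [mulVec, dotProduct, mul_apply]
    rw [h1, hRS]
    rw [Matrix.sum_apply]
    refine Finset.sum_congr rfl fun i _ => ?_
    simp [vecMulVec_apply, mul_assoc]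
  have hg : ∀ (Wt : Matrix (Fin n) (Fin k) ℝ) (t : Fin T) (j : Fin k),
      (Wtᵀ *ᵥ x t) j = ∑ i, (σ i * (Wtᵀ *ᵥ u i) j) * v i t := by
    intro Wt t j
    simp only [mulVec, dotProduct, transpose_apply]
    simp_rw [hxapp, Finset.mul_sum]
    rw [Finset.sum_comm]
    refine Finset.sum_congr rfl fun i _ => ?_
    rw [Finset.sum_mul]
    refine Finset.sum_congr rfl fun a _ => by ring
  have hB : ∀ Wt : Matrix (Fin n) (Fin k) ℝ,
      (∑ t, (Wtᵀ *ᵥ x t) ⬝ᵥ (Wtᵀ *ᵥ x t))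
        = ∑ i, σ i ^ 2 * ((Wtᵀ *ᵥ u i) ⬝ᵥ (Wtᵀ *ᵥ u i)) := by
    intro Wt
    have step1 : ∀ t, (Wtᵀ *ᵥ x t) ⬝ᵥ (Wtᵀ *ᵥ x t)
        = ∑ j, (∑ i, (σ i * (Wtᵀ *ᵥ u i) j) * v i t)
            * (∑ i, (σ i * (Wtᵀ *ᵥ u i) j) * v i t) := by
      intro t
      rw [dotProduct]
      exact Finset.sum_congr rfl fun j _ => by rw [hg]
    simp_rw [step1]
    rw [Finset.sum_comm]
    have step2 : ∀ j : Fin k,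
        (∑ t, (∑ i, (σ i * (Wtᵀ *ᵥ u i) j) * v i t)
            * (∑ i, (σ i * (Wtᵀ *ᵥ u i) j) * v i t))
        = ∑ i, (σ i * (Wtᵀ *ᵥ u i) j) * (σ i * (Wtᵀ *ᵥ u i) j) :=
      fun j => pod_orth_sum v hv _ _
    simp_rw [step2]
    rw [Finset.sum_comm]
    refine Finset.sum_congr rfl fun i _ => ?_
    rw [dotProduct, Finset.mul_sum]
    exact Finset.sum_congr rfl fun j _ => by ring
  -- bounds for the competitor V
  set Vt := R * V with hVt
  have hVo : Vtᵀ * Vt = 1 := by rw [hVt, ← hWt, hV]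
  have hc0 : ∀ i : Fin r, 0 ≤ (Vtᵀ *ᵥ u i) ⬝ᵥ (Vtᵀ *ᵥ u i) := fun i => pod_dp_self_nonneg _
  have hc1 : ∀ i : Fin r, (Vtᵀ *ᵥ u i) ⬝ᵥ (Vtᵀ *ᵥ u i) ≤ 1 := by
    intro i
    have h0 := pod_dp_self_nonneg (u i - Vt *ᵥ (Vtᵀ *ᵥ u i))
    rw [pod_aux_proj Vt hVo] at h0
    have huu : u i ⬝ᵥ u i = 1 := by rw [hu]; simp
    linarith
  have hcs : (∑ i, (Vtᵀ *ᵥ u i) ⬝ᵥ (Vtᵀ *ᵥ u i)) ≤ (k : ℝ) := by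
    have h1 : ∀ i : Fin r, (Vtᵀ *ᵥ u i) ⬝ᵥ (Vtᵀ *ᵥ u i)
        = ∑ j : Fin k, (u i ⬝ᵥ (fun a => Vt a j)) ^ 2 := by
      intro i
      rw [dotProduct]
      refine Finset.sum_congr rfl fun j _ => ?_
      have h2 : (Vtᵀ *ᵥ u i) j = u i ⬝ᵥ (fun a => Vt a j) := by
        simp only [mulVec, dotProduct, transpose_apply]
        exact Finset.sum_congr rfl fun a _ => mul_comm _ _
      rw [h2]; ring
    simp_rw [h1]
    rw [Finset.sum_comm]
    have h2 : ∀ j : Fin k, (∑ i, (u i ⬝ᵥ (fun a => Vt a j)) ^ 2) ≤ 1 := by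
      intro j
      have hb := pod_bessel u hu (fun a => Vt a j)
      have hjj : (fun a => Vt a j) ⬝ᵥ (fun a => Vt a j) = 1 := by
        have h3 := congrArg (fun A : Matrix (Fin k) (Fin k) ℝ => A j j) hVo
        simp only [mul_apply, transpose_apply, one_apply_eq] at h3
        rw [dotProduct]
        exact h3
      linarith
    calc (∑ j : Fin k, ∑ i, (u i ⬝ᵥ (fun a => Vt a j)) ^ 2)
        ≤ ∑ _j : Fin k, (1 : ℝ) := Finset.sum_le_sum fun j _ => h2 j
      _ = k := by simp
  -- value at Ut
  have hcUt : ∀ i : Fin r, (Utᵀ *ᵥ u i) ⬝ᵥ (Utᵀ *ᵥ u i)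
      = if (i : ℕ) < k then 1 else 0 := by
    intro i
    have hcol : ∀ j : Fin k, (Utᵀ *ᵥ u i) j = if Fin.castLE hk j = i then 1 else 0 := by
      intro j
      simp only [mulVec, dotProduct, transpose_apply, hUt, Matrix.of_apply]
      have h := hu (Fin.castLE hk j) i
      rw [dotProduct] at h
      exact h
    rw [dotProduct]
    simp_rw [hcol]
    have hii : ∀ j : Fin k, (if Fin.castLE hk j = i then (1:ℝ) else 0)
        * (if Fin.castLE hk j = i then (1:ℝ) else 0)
        = if Fin.castLE hk j = i then 1 else 0 := by
      intro j; by_cases h : Fin.castLE hk j = i <;> simp [h]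
    simp_rw [hii]
    by_cases hik : (i : ℕ) < k
    · rw [if_pos hik]
      rw [Finset.sum_eq_single (⟨(i : ℕ), hik⟩ : Fin k)]
      · rw [if_pos]; ext; simp
      · intro j _ hj
        rw [if_neg]
        intro h
        apply hj
        have := congrArg Fin.val h
        simp at this
        exact Fin.ext this
      · intro h; exact absurd (Finset.mem_univ _) h
    · rw [if_neg hik]
      refine Finset.sum_eq_zero fun j _ => ?_
      rw [if_neg]
      intro h
      apply hik
      rw [← h]
      simpa using j.isLt
  have hUtsum : (∑ i, σ i ^ 2 * ((Utᵀ *ᵥ u i) ⬝ᵥ (Utᵀ *ᵥ u i)))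
      = ∑ i ∈ Finset.univ.filter (fun i : Fin r => (i : ℕ) < k), σ i ^ 2 := by
    simp_rw [hcUt, mul_ite, mul_one, mul_zero]
    rw [Finset.sum_filter]
  have hkey := pod_comb hk σ hσnn hσmono _ hc0 hc1 hcs
  have hcostU := hcost2 U part1
  have hcostV := hcost2 V hV
  rw [hRU, hB Ut] at hcostU
  rw [hB Vt] at hcostV
  rw [hUtsum] at hcostU
  rw [hcostU, hcostV]
  linarith
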